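/- If S_∞ ≠ ∅ then [S_∞] is nonempty, and moreover [S_∞] contains both a point of S and a point of the complement of S. -/

import Mathlib

open Ordinal Filter Topology

/-- The first `n` values of `f` as a finite sequence. -/
def seg (f : ℕ → ℕ) (n : ℕ) : List ℕ := (List.range n).map f

/-- `[X]`: the set of infinite sequences all of whose initial segments lie in `X`. -/
def ext (X : Set (List ℕ)) : Set (ℕ → ℕ) := {f | ∀ n, seg f n ∈ X}

/-- `σ` is an initial segment of `f`. -/
def isInit (σ : List ℕ) (f : ℕ → ℕ) : Prop := seg f σ.length = σ

/-- One step of the derivative process relative to `S`. -/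
def derivStep (S : Set (ℕ → ℕ)) (X : Set (List ℕ)) : Set (List ℕ) :=
  {x ∈ X | ∃ f g : ℕ → ℕ, f ∈ ext X ∧ g ∈ ext X ∧ isInit x f ∧ isInit x g ∧ f ∈ S ∧ g ∉ S}

/-- The transfinite sequence `S_α`. -/
noncomputable def dSeq (S : Set (ℕ → ℕ)) (α : Ordinal.{0}) : Set (List ℕ) :=
  Ordinal.limitRecOn α Set.univ (fun _ X => derivStep S X)
    (fun o _ ih => ⋂ (β : Set.Iio o), ih β.1 β.2)

/-- `α(S)`: the least ordinal where the process stabilizes. -/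
noncomputable def kernelOrd (S : Set (ℕ → ℕ)) : Ordinal.{0} :=
  sInf {α | dSeq S α = dSeq S (α + 1)}

/-- `S_∞`, the kernel. -/
noncomputable def kernel (S : Set (ℕ → ℕ)) : Set (List ℕ) := dSeq S (kernelOrd S)

/-- `β(σ)`: the least ordinal `α` with `σ ∉ S_α`. -/
noncomputable def bOrd (S : Set (ℕ → ℕ)) (σ : List ℕ) : Ordinal.{0} :=
  sInf {α | σ ∉ dSeq S α}

open Classical in
/-- `S` is guessable. -/
def Guessable (S : Set (ℕ → ℕ)) : Prop :=
  ∃ G : List ℕ → ℕ, ∀ f : ℕ → ℕ,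
    Tendsto (fun n => G (seg f n)) atTop (𝓝 (if f ∈ S then 1 else 0))

/-- `Δ⁰₂`: both a countable union of closed sets and a countable intersection of open sets. -/
def IsDelta02 (S : Set (ℕ → ℕ)) : Prop :=
  (∃ F : ℕ → Set (ℕ → ℕ), (∀ n, IsClosed (F n)) ∧ S = ⋃ n, F n) ∧
  (∃ U : ℕ → Set (ℕ → ℕ), (∀ n, IsOpen (U n)) ∧ S = ⋂ n, U n)

/-! The sets `S_α` decrease, and a strictly decreasing family of subsets of `List ℕ` indexed by
all ordinals would inject the ordinals into a small type; so the sequence stabilizes and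
`S_∞ = derivStep S S_∞`. Any `σ ∈ S_∞` then comes with branches of `[S_∞]` inside and outside `S`. -/

section DerivativeSequence

variable (S : Set (ℕ → ℕ))

lemma dSeq_add_one (α : Ordinal.{0}) : dSeq S (α + 1) = derivStep S (dSeq S α) := by
  simp only [dSeq, Ordinal.limitRecOn_add_one]

lemma dSeq_of_isSuccLimit {o : Ordinal.{0}} (ho : Order.IsSuccLimit o) :
    dSeq S o = ⋂ β : Set.Iio o, dSeq S β := by
  rw [dSeq, Ordinal.limitRecOn_limit _ _ _ _ ho]
  rfl

lemma derivStep_subset (X : Set (List ℕ)) : derivStep S X ⊆ X :=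
  fun _ hx => hx.1

lemma dSeq_add_one_subset (α : Ordinal.{0}) : dSeq S (α + 1) ⊆ dSeq S α :=
  dSeq_add_one S α ▸ derivStep_subset S _

lemma dSeq_antitone : Antitone (dSeq S) := by
  intro β α hβα
  induction α using Ordinal.limitRecOn with
  | zero => rw [nonpos_iff_eq_zero.mp hβα]
  | add_one α ih =>
    rcases hβα.eq_or_lt with rfl | hlt
    · exact subset_rfl
    · exact (dSeq_add_one_subset S α).trans (ih (Order.lt_add_one_iff.mp hlt))
  | limit o ho _ =>
    rcases hβα.eq_or_lt with rfl | hlt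
    · exact subset_rfl
    · rw [dSeq_of_isSuccLimit S ho]
      exact Set.iInter_subset (fun β : Set.Iio o => dSeq S β) ⟨β, hlt⟩

lemma exists_dSeq_eq_dSeq_add_one : ∃ α, dSeq S α = dSeq S (α + 1) := by
  by_contra! hne
  have hstrict : StrictAnti (dSeq S) := fun a b hab =>
    calc dSeq S b ⊆ dSeq S (a + 1) := dSeq_antitone S (Order.add_one_le_of_lt hab)
      _ ⊂ dSeq S a := (dSeq_add_one_subset S a).ssubset_of_ne (hne a).symm
  exact not_injective_of_ordinal _ hstrict.injective

lemma kernel_eq_derivStep_kernel : kernel S = derivStep S (kernel S) :=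
  (csInf_mem (exists_dSeq_eq_dSeq_add_one S)).trans (dSeq_add_one S _)

end DerivativeSequence

theorem stmt19 (S : Set (ℕ → ℕ)) (h : kernel S ≠ ∅) :
    (ext (kernel S)).Nonempty ∧ (∃ f ∈ ext (kernel S), f ∈ S) ∧
      (∃ g ∈ ext (kernel S), g ∉ S) := by
  obtain ⟨σ, hσ⟩ := Set.nonempty_iff_ne_empty.mpr h
  rw [kernel_eq_derivStep_kernel S] at hσ
  obtain ⟨-, f, g, hf, hg, -, -, hfS, hgS⟩ := hσ
  exact ⟨⟨f, hf⟩, ⟨f, hf, hfS⟩, ⟨g, hg, hgS⟩⟩
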